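/- arXiv:1611.10342 — 2 statements merged into one kernel-verified Lean document; each statement's English description precedes it below -/
import Mathlib

section
/- The construction assigning to a BM graph (V, F, ∂, j) the JK graph (A = F + T, H = F, V) with involution i given by j on non-fixed flags and interchanging each fixed flag with its copy in T, and the construction assigning to a JK graph without isolated edges the BM graph with F := H and j(f) = s^{-1}(i(s(f))) when i(s(f)) lies in the image of s, and j(f) = f otherwise, are mutually inverse bijections (up to canonical isomorphism) between BM graphs and JK graphs without isolated edges. -/
/-- A Borisov–Manin graph: a quadruple `(V, F, ∂, j)` of finite sets with
`∂ : F → V` and `j : F → F` an involution.  Fixpoints of `j` are *tails*;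
2-element orbits of `j` are *edges*. -/
structure BMGraph where
  V : Type
  F : Type
  fintV : Fintype V
  fintF : Fintype F
  decF : DecidableEq F
  bd : F → V
  j : F → F
  j_invol : ∀ f, j (j f) = f

attribute [instance] BMGraph.fintV BMGraph.fintF BMGraph.decF

/-- A Borisov–Manin morphism `τ → σ`: a triple `(h^F, h_V, j_h)` satisfying the
Borisov–Manin axioms.  The involution `j_h` is recorded as a total map on `F_τ`,
normalised to be the identity on the image of the flag map, and a fixpoint-free
involution on the complement, agreeing with `j_τ` on edges. -/
structure BMHom (τ σ : BMGraph) where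
  flagMap : σ.F → τ.F
  vertexMap : τ.V → σ.V
  jh : τ.F → τ.F
  flag_inj : Function.Injective flagMap
  vertex_surj : Function.Surjective vertexMap
  range_j_closed : ∀ f : σ.F, τ.j (flagMap f) ∈ Set.range flagMap
  compl_j_closed : ∀ g : τ.F, g ∉ Set.range flagMap → τ.j g ∉ Set.range flagMap
  jh_range : ∀ g ∈ Set.range flagMap, jh g = g
  jh_compl : ∀ g, g ∉ Set.range flagMap → jh g ∉ Set.range flagMap
  jh_invol : ∀ g, jh (jh g) = g
  jh_nofix : ∀ g, g ∉ Set.range flagMap → jh g ≠ g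
  jh_edge : ∀ g, g ∉ Set.range flagMap → τ.j g ≠ g → jh g = τ.j g
  bd_comm : ∀ f : σ.F, vertexMap (τ.bd (flagMap f)) = σ.bd f
  contract_bd : ∀ g, g ∉ Set.range flagMap → vertexMap (τ.bd (jh g)) = vertexMap (τ.bd g)
  edges_to_edges : ∀ f f' : σ.F, τ.j (flagMap f) = flagMap f' → flagMap f ≠ flagMap f' → σ.j f = f'

/-- A grafting: both the vertex map and the flag map are bijective. -/
def IsGrafting {τ σ : BMGraph} (h : BMHom τ σ) : Prop :=
  Function.Bijective h.flagMap ∧ Function.Bijective h.vertexMap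

/-- A compression: the flag map restricts to a bijection from the tails of the
codomain graph onto the tails of the domain graph. -/
def IsCompression {τ σ : BMGraph} (h : BMHom τ σ) : Prop :=
  (∀ f : σ.F, σ.j f = f → τ.j (h.flagMap f) = h.flagMap f) ∧
  (∀ g : τ.F, τ.j g = g → ∃ f : σ.F, σ.j f = f ∧ h.flagMap f = g)

/-- A Joyal–Kock graph: a diagram of finite sets `A ←s– H –p→ V` with `s`
injective and a fixpoint-free involution `i` on the set of arcs `A`. -/
structure JKGraph where
  A : Type
  H : Type
  V : Type
  fintA : Fintype A
  fintH : Fintype H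
  fintV : Fintype V
  decA : DecidableEq A
  decH : DecidableEq H
  s : H → A
  p : H → V
  i : A → A
  s_inj : Function.Injective s
  i_invol : ∀ a, i (i a) = a
  i_nofix : ∀ a, i a ≠ a

attribute [instance] JKGraph.fintA JKGraph.fintH JKGraph.fintV JKGraph.decA JKGraph.decH

/-- An etale morphism of JK graphs: a levelwise map commuting with `s`, `p`
and the involutions, such that the square on `H` and `V` is a pullback (each
vertex maps to a vertex of the same valence). -/
structure Etale (G G' : JKGraph) where
  fA : G.A → G'.A
  fH : G.H → G'.H
  fV : G.V → G'.V
  comm_s : ∀ h, fA (G.s h) = G'.s (fH h)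
  comm_p : ∀ h, fV (G.p h) = G'.p (fH h)
  comm_i : ∀ a, fA (G.i a) = G'.i (fA a)
  pullback : ∀ (h' : G'.H) (v : G.V), G'.p h' = fV v → ∃! h : G.H, G.p h = v ∧ fH h = h'

/-- `IsEComp e1 e2 e` expresses that `e` is the (levelwise) composite of the
etale morphisms `e1` followed by `e2`. -/
def IsEComp {G G' G'' : JKGraph} (e1 : Etale G G') (e2 : Etale G' G'') (e : Etale G G'') : Prop :=
  (∀ a, e.fA a = e2.fA (e1.fA a)) ∧ (∀ h, e.fH h = e2.fH (e1.fH h)) ∧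
  (∀ v, e.fV v = e2.fV (e1.fV v))

/-- The ports of a graph: the arcs not in the image of `s`. -/
def JKGraph.ports (G : JKGraph) : Set G.A := {a | a ∉ Set.range G.s}

/-- An edge (i-orbit) is isolated if neither of its arcs lies in the image of
`s`; `NoIsolated` says the graph has no isolated edges. -/
def NoIsolated (G : JKGraph) : Prop :=
  ∀ a : G.A, a ∈ Set.range G.s ∨ G.i a ∈ Set.range G.s

/-- A reduced cover: an etale morphism which is surjective on arcs (hence on
edges) and bijective on vertices. -/
def IsReducedCover {R X : JKGraph} (e : Etale R X) : Prop :=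
  Function.Bijective e.fV ∧ Function.Surjective e.fA

/-- The JK graph associated to a BM graph `(V, F, ∂, j)`: half-edges are the
flags, arcs are `F + T` (`T` the set of tails), `s` the inclusion, `p = ∂`,
and the involution is `j` on non-fixed flags while interchanging each tail
with its copy in `T`. -/
def toJK (τ : BMGraph) : JKGraph where
  A := τ.F ⊕ {f : τ.F // τ.j f = f}
  H := τ.F
  V := τ.V
  fintA := inferInstance
  fintH := τ.fintF
  fintV := τ.fintV
  decA := inferInstance
  decH := τ.decF
  s := Sum.inl
  p := τ.bd
  i := fun a =>
    match a with
    | Sum.inl f => if h : τ.j f = f then Sum.inr ⟨f, h⟩ else Sum.inl (τ.j f)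
    | Sum.inr t => Sum.inl t.val
  s_inj := fun _ _ h => Sum.inl_injective h
  i_invol := by
    rintro (f | t)
    · by_cases hf : τ.j f = f
      · simp [hf]
      · simp only [dif_neg hf]
        have : ¬ τ.j (τ.j f) = τ.j f := by
          rw [τ.j_invol]; intro h; exact hf h.symm
        simp only [dif_neg this, τ.j_invol]
        exact dif_neg fun h => hf h.symm
    · simp [t.prop]
  i_nofix := by
    rintro (f | t) h
    · by_cases hf : τ.j f = f
      · simp [hf] at h
      · simp only [dif_neg hf] at h
        exact hf (Sum.inl_injective h)
    · simp at h

open scoped Classical in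
/-- The BM graph associated to a JK graph: flags are the half-edges,
`∂ = p`, and `j` sends a flag `f` to the flag `f'` with `s f' = i (s f)` when
such a flag exists (i.e. when `f` is part of an inner edge), and fixes `f`
otherwise. -/
noncomputable def fromJK (G : JKGraph) : BMGraph where
  V := G.V
  F := G.H
  fintV := G.fintV
  fintF := G.fintH
  decF := G.decH
  bd := G.p
  j := fun f => if h : ∃ f', G.s f' = G.i (G.s f) then h.choose else f
  j_invol := by
    intro f
    by_cases h : ∃ f', G.s f' = G.i (G.s f)
    · simp only [dif_pos h]
      have hs : G.s h.choose = G.i (G.s f) := h.choose_spec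
      have h2 : ∃ f', G.s f' = G.i (G.s h.choose) := ⟨f, by rw [hs, G.i_invol]⟩
      rw [dif_pos h2]
      apply G.s_inj
      rw [h2.choose_spec, hs, G.i_invol]
    · simp only [dif_neg h]

/-- Existence of an isomorphism of BM graphs. -/
def ExistsBMIso (τ σ : BMGraph) : Prop :=
  ∃ (eV : τ.V ≃ σ.V) (eF : τ.F ≃ σ.F),
    (∀ f, eV (τ.bd f) = σ.bd (eF f)) ∧ (∀ f, eF (τ.j f) = σ.j (eF f))

/-- Existence of an isomorphism of JK graphs (an etale morphism bijective on
arcs, half-edges and vertices). -/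
def ExistsJKIso (G G' : JKGraph) : Prop :=
  ∃ e : Etale G G', Function.Bijective e.fA ∧ Function.Bijective e.fH ∧
    Function.Bijective e.fV

/-!
Going from BM to JK and back, the arc `i (s f)` of a flag `f` is `s (j f)` exactly when `f` is
not a tail, so `j` is recovered on the nose. Going from JK to BM and back, the new arcs are the
tails' partners `i (s t)`; these are precisely the arcs outside the image of `s` when no edge is
isolated, so sending `inl f ↦ s f` and `inr t ↦ i (s t)` identifies the arcs, with the identity
on half-edges and vertices.
-/

section FromJK

variable (G : JKGraph) {f g : G.H}

theorem JKGraph.i_injective : Function.Injective G.i :=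
  Function.Involutive.injective G.i_invol

theorem fromJK_j_eq_of_s_eq (h : G.s g = G.i (G.s f)) : (fromJK G).j f = g := by
  have hex : ∃ f', G.s f' = G.i (G.s f) := ⟨g, h⟩
  simp only [fromJK, dif_pos hex]
  exact G.s_inj (hex.choose_spec.trans h.symm)

theorem fromJK_j_eq_self_iff : (fromJK G).j f = f ↔ G.i (G.s f) ∉ Set.range G.s := by
  constructor
  · rintro hf ⟨g, hg⟩
    obtain rfl : f = g := hf.symm.trans (fromJK_j_eq_of_s_eq G hg)
    exact G.i_nofix _ hg.symm
  · intro hf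
    exact dif_neg hf

theorem fromJK_s_j_of_ne (hf : (fromJK G).j f ≠ f) : G.s ((fromJK G).j f) = G.i (G.s f) := by
  obtain ⟨g, hg⟩ := not_not.mp (mt (fromJK_j_eq_self_iff G).mpr hf)
  rwa [fromJK_j_eq_of_s_eq G hg]

end FromJK

section ToJK

variable (τ : BMGraph) {f : τ.F}

theorem toJK_i_inl_of_eq (hf : τ.j f = f) : (toJK τ).i (Sum.inl f) = Sum.inr ⟨f, hf⟩ := by
  simp [toJK, hf]

theorem toJK_i_inl_of_ne (hf : τ.j f ≠ f) : (toJK τ).i (Sum.inl f) = Sum.inl (τ.j f) := by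
  simp [toJK, hf]

theorem fromJK_toJK_j (f : τ.F) : (fromJK (toJK τ)).j f = τ.j f := by
  by_cases hf : τ.j f = f
  · rw [hf]
    refine (fromJK_j_eq_self_iff (toJK τ)).mpr ?_
    change (toJK τ).i (Sum.inl f) ∉ _
    rw [toJK_i_inl_of_eq τ hf]
    rintro ⟨g, hg⟩
    cases hg
  · exact fromJK_j_eq_of_s_eq (toJK τ) (toJK_i_inl_of_ne τ hf).symm

end ToJK

section ToJKFromJK

variable (G : JKGraph)

def toJKFromJKArc : (toJK (fromJK G)).A → G.A :=
  Sum.elim G.s fun t => G.i (G.s t.val)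

theorem toJKFromJKArc_i (a : (toJK (fromJK G)).A) :
    toJKFromJKArc G ((toJK (fromJK G)).i a) = G.i (toJKFromJKArc G a) := by
  rcases a with f | t
  · by_cases hf : (fromJK G).j f = f
    · rw [toJK_i_inl_of_eq (fromJK G) hf]
      rfl
    · rw [toJK_i_inl_of_ne (fromJK G) hf]
      exact fromJK_s_j_of_ne G hf
  · exact (G.i_invol _).symm

theorem toJKFromJKArc_injective : Function.Injective (toJKFromJKArc G) := by
  have tail_arc_not_mem (t : {f // (fromJK G).j f = f}) : G.i (G.s t.val) ∉ Set.range G.s :=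
    (fromJK_j_eq_self_iff G).mp t.prop
  rintro (f | t) (f' | t') h
  · exact congrArg Sum.inl (G.s_inj h)
  · exact absurd ⟨f, h⟩ (tail_arc_not_mem t')
  · exact absurd ⟨f', h.symm⟩ (tail_arc_not_mem t)
  · exact congrArg Sum.inr (Subtype.ext (G.s_inj (G.i_injective h)))

theorem toJKFromJKArc_surjective (hG : NoIsolated G) :
    Function.Surjective (toJKFromJKArc G) := by
  intro a
  by_cases ha : a ∈ Set.range G.s
  · obtain ⟨f, rfl⟩ := ha
    exact ⟨Sum.inl f, rfl⟩
  · obtain ⟨f, hf⟩ := (hG a).resolve_left ha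
    have ha' : G.i (G.s f) = a := by rw [hf, G.i_invol]
    have htail : (fromJK G).j f = f := (fromJK_j_eq_self_iff G).mpr (ha' ▸ ha)
    exact ⟨Sum.inr ⟨f, htail⟩, ha'⟩

def toJKFromJKEtale : Etale (toJK (fromJK G)) G where
  fA := toJKFromJKArc G
  fH := id
  fV := id
  comm_s _ := rfl
  comm_p _ := rfl
  comm_i := toJKFromJKArc_i G
  pullback h _ hv := ⟨h, ⟨hv, rfl⟩, fun _ hy => hy.2⟩

end ToJKFromJK

/-- The constructions `toJK` (from BM graphs to JK graphs)
and `fromJK` (from JK graphs without isolated edges to BM graphs) are mutually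
inverse up to canonical isomorphism. -/
theorem toJK_fromJK_inverse :
    (∀ τ : BMGraph, ExistsBMIso (fromJK (toJK τ)) τ) ∧
    (∀ G : JKGraph, NoIsolated G → ExistsJKIso (toJK (fromJK G)) G) :=
  ⟨fun τ => ⟨Equiv.refl _, Equiv.refl _, fun _ => rfl, fromJK_toJK_j τ⟩,
    fun G hG => ⟨toJKFromJKEtale G,
      ⟨toJKFromJKArc_injective G, toJKFromJKArc_surjective G hG⟩,
      Function.bijective_id, Function.bijective_id⟩⟩
end

section
/- Every Joyal–Kock graph G is canonically the colimit, in the category of graphs and etale morphisms, of the diagram of its elementary subgraphs, indexed by the category of elements el(G) = elGr ↓ G, where elGr is the full subcategory of elementary graphs (connected graphs without inner edges). -/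
/-- A JK graph is connected if it is nonempty and admits no nontrivial
splitting into a clopen subsystem: any nonempty collection of arcs and
vertices, closed under the involution and such that a flag's arc belongs iff
its vertex belongs, must be everything. -/
def JKIsConnected (G : JKGraph) : Prop :=
  (Nonempty G.A ∨ Nonempty G.V) ∧
  ∀ (SA : Set G.A) (SV : Set G.V),
    (∀ a ∈ SA, G.i a ∈ SA) →
    (∀ h : G.H, G.s h ∈ SA ↔ G.p h ∈ SV) →
    (SA.Nonempty ∨ SV.Nonempty) → (SA = Set.univ ∧ SV = Set.univ)

/-- An elementary graph: connected and without inner edges. -/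
def JKIsElementary (E : JKGraph) : Prop :=
  JKIsConnected E ∧ ∀ h h' : E.H, E.i (E.s h) ≠ E.s h'


/-!
The elementary graphs over `G` that matter are the unit graph sent to an arc `a` of `G` and
the corolla of a vertex `v` of `G` (its flags and their reversed arcs) with its inclusion. Every
arc, vertex and flag of an elementary graph `E` over `G` is seen by one of these through a map
over `G`: the unit graph picks out an arc of `E`, and since `E → G` is a pullback on flags, the
corolla of the image of a vertex `v` of `E` lifts into `E` around `v`.
Hence a cocone determines a unique levelwise map `G → K`, read off on units and corollas, and the
pullback condition for it is the one for the cocone's corolla components.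
-/

noncomputable section

attribute [ext] Etale

abbrev unitGraph : JKGraph where
  A := Bool
  H := Empty
  V := Empty
  fintA := inferInstance
  fintH := inferInstance
  fintV := inferInstance
  decA := inferInstance
  decH := inferInstance
  s := Empty.elim
  p := Empty.elim
  i := not
  s_inj := fun h => h.elim
  i_invol := Bool.not_not
  i_nofix := Bool.not_ne_self

theorem unitGraph_isElementary : JKIsElementary unitGraph := by
  refine ⟨⟨Or.inl ⟨true⟩, fun SA _ hi _ hne => ⟨?_, Set.eq_univ_of_forall (·.elim)⟩⟩,
    (·.elim)⟩
  obtain ⟨a, ha⟩ : SA.Nonempty := hne.resolve_right fun ⟨v, _⟩ => v.elim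
  refine Set.eq_univ_of_forall fun b => ?_
  rcases Bool.eq_or_eq_not b a with rfl | rfl
  exacts [ha, hi a ha]

def unitMap (G : JKGraph) (a : G.A) : Etale unitGraph G where
  fA b := bif b then a else G.i a
  fH := Empty.elim
  fV := Empty.elim
  comm_s h := h.elim
  comm_p h := h.elim
  comm_i b := by cases b <;> simp [G.i_invol]
  pullback _ v _ := v.elim

theorem isEComp_unitMap {E G : JKGraph} (m : Etale E G) (a : E.A) :
    IsEComp (unitMap E a) m (unitMap G (m.fA a)) :=
  ⟨fun b => by cases b <;> simp [unitMap, m.comm_i], (·.elim), (·.elim)⟩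

abbrev corolla (G : JKGraph) (v : G.V) : JKGraph :=
  letI : DecidablePred (fun h : G.H => G.p h = v) := fun _ => Classical.dec _
  { A := {h : G.H // G.p h = v} ⊕ {h : G.H // G.p h = v}
    H := {h : G.H // G.p h = v}
    V := Unit
    fintA := inferInstance
    fintH := inferInstance
    fintV := inferInstance
    decA := inferInstance
    decH := inferInstance
    s := Sum.inl
    p := fun _ => ()
    i := Sum.swap
    s_inj := Sum.inl_injective
    i_invol := Sum.swap_swap
    i_nofix := fun a => by cases a <;> simp }

theorem corolla_isElementary (G : JKGraph) (v : G.V) : JKIsElementary (corolla G v) := by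
  refine ⟨⟨Or.inr ⟨()⟩, fun SA SV hi hc hne => ?_⟩, fun h h' heq => Sum.inr_ne_inl heq⟩
  have hv : () ∈ SV := by
    rcases hne with ⟨a | a, ha⟩ | ⟨⟨⟩, hv⟩
    exacts [(hc a).1 ha, (hc a).1 (hi _ ha), hv]
  refine ⟨Set.eq_univ_of_forall fun a => ?_, Set.eq_univ_of_forall fun _ => hv⟩
  rcases a with a | a
  exacts [(hc a).2 hv, hi _ ((hc a).2 hv)]

def corollaMap (G : JKGraph) (v : G.V) : Etale (corolla G v) G where
  fA := Sum.elim (fun x => G.s x.1) (fun x => G.i (G.s x.1))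
  fH := Subtype.val
  fV _ := v
  comm_s _ := rfl
  comm_p h := h.2.symm
  comm_i a := by cases a <;> simp [G.i_invol]
  pullback h' _ hp := ⟨⟨h', hp⟩, ⟨rfl, rfl⟩, fun _ hy => Subtype.ext hy.2⟩

namespace Etale

variable {E G : JKGraph} (m : Etale E G) (v : E.V)

def liftFlag (x : {h : G.H // G.p h = m.fV v}) : E.H :=
  (m.pullback x.1 v x.2).exists.choose

theorem p_liftFlag (x : {h : G.H // G.p h = m.fV v}) : E.p (m.liftFlag v x) = v :=
  (m.pullback x.1 v x.2).exists.choose_spec.1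

theorem fH_liftFlag (x : {h : G.H // G.p h = m.fV v}) : m.fH (m.liftFlag v x) = x.1 :=
  (m.pullback x.1 v x.2).exists.choose_spec.2

theorem liftFlag_eq {x : {h : G.H // G.p h = m.fV v}} {h : E.H} (hp : E.p h = v)
    (hh : m.fH h = x.1) : m.liftFlag v x = h :=
  (m.pullback x.1 v x.2).unique ⟨m.p_liftFlag v x, m.fH_liftFlag v x⟩ ⟨hp, hh⟩

def corollaLift : Etale (corolla G (m.fV v)) E where
  fA := Sum.elim (fun x => E.s (m.liftFlag v x)) (fun x => E.i (E.s (m.liftFlag v x)))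
  fH := m.liftFlag v
  fV _ := v
  comm_s _ := rfl
  comm_p x := (m.p_liftFlag v x).symm
  comm_i a := by cases a <;> simp [E.i_invol]
  pullback h _ hp := by
    have hx : G.p (m.fH h) = m.fV v := by rw [← m.comm_p, hp]
    refine ⟨⟨m.fH h, hx⟩, ⟨rfl, m.liftFlag_eq v hp rfl⟩, fun y hy => Subtype.ext ?_⟩
    exact (m.fH_liftFlag v y).symm.trans (congrArg m.fH hy.2)

theorem isEComp_corollaLift : IsEComp (m.corollaLift v) m (corollaMap G (m.fV v)) := by
  refine ⟨fun a => ?_, fun x => (m.fH_liftFlag v x).symm, fun _ => rfl⟩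
  rcases a with x | x <;>
    simp [corollaLift, corollaMap, m.comm_i, m.comm_s, m.fH_liftFlag]

end Etale

section Cocone

variable {G K : JKGraph} (c : ∀ E : JKGraph, Etale E G → JKIsElementary E → Etale E K)

def IsCoconeNatural : Prop :=
  ∀ (E E' : JKGraph) (hE : JKIsElementary E) (hE' : JKIsElementary E')
    (m : Etale E G) (m' : Etale E' G) (e : Etale E E'),
    IsEComp e m' m → IsEComp e (c E' m' hE') (c E m hE)

def FactorsCocone (u : Etale G K) : Prop :=
  ∀ (E : JKGraph) (m : Etale E G) (hE : JKIsElementary E), IsEComp m u (c E m hE)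

abbrev unitLeg (a : G.A) : Etale unitGraph K :=
  c unitGraph (unitMap G a) unitGraph_isElementary

abbrev corollaLeg (v : G.V) : Etale (corolla G v) K :=
  c (corolla G v) (corollaMap G v) (corolla_isElementary G v)

def coconeH (h : G.H) : K.H :=
  (corollaLeg c (G.p h)).fH ⟨h, rfl⟩

theorem coconeH_eq {v : G.V} {h : G.H} (hh : G.p h = v) :
    coconeH c h = (corollaLeg c v).fH ⟨h, hh⟩ := by
  subst hh; rfl

variable {c}

theorem unitLeg_fA_true (hc : IsCoconeNatural c) {E : JKGraph} (hE : JKIsElementary E)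
    (m : Etale E G) (a : E.A) : (unitLeg c (m.fA a)).fA true = (c E m hE).fA a :=
  (hc _ _ _ hE _ m _ (isEComp_unitMap m a)).1 true

theorem corollaLeg_fV (hc : IsCoconeNatural c) {E : JKGraph} (hE : JKIsElementary E)
    (m : Etale E G) (v : E.V) : (corollaLeg c (m.fV v)).fV () = (c E m hE).fV v :=
  (hc _ _ _ hE _ m _ (m.isEComp_corollaLift v)).2.2 ()

theorem coconeH_fH (hc : IsCoconeNatural c) {E : JKGraph} (hE : JKIsElementary E)
    (m : Etale E G) (h : E.H) : coconeH c (m.fH h) = (c E m hE).fH h := by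
  have hh : G.p (m.fH h) = m.fV (E.p h) := (m.comm_p h).symm
  calc coconeH c (m.fH h) = (corollaLeg c _).fH ⟨m.fH h, hh⟩ := coconeH_eq c hh
    _ = (c E m hE).fH (m.liftFlag _ ⟨m.fH h, hh⟩) :=
      (hc _ _ _ hE _ m _ (m.isEComp_corollaLift (E.p h))).2.1 _
    _ = (c E m hE).fH h := congrArg _ (m.liftFlag_eq _ rfl rfl)

def coconeDesc (hc : IsCoconeNatural c) : Etale G K where
  fA a := (unitLeg c a).fA true
  fH := coconeH c
  fV v := (corollaLeg c v).fV ()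
  comm_s h :=
    (unitLeg_fA_true hc (corolla_isElementary G (G.p h)) (corollaMap G (G.p h))
      (.inl ⟨h, rfl⟩)).trans ((corollaLeg c (G.p h)).comm_s ⟨h, rfl⟩)
  comm_p h := (corollaLeg c (G.p h)).comm_p ⟨h, rfl⟩
  comm_i a := by
    rw [← (unitLeg c a).comm_i true]
    exact unitLeg_fA_true hc unitGraph_isElementary (unitMap G a) false
  pullback h' v hp := by
    obtain ⟨x, ⟨-, hx⟩, hx_unique⟩ := (corollaLeg c v).pullback h' () hp
    refine ⟨x.1, ⟨x.2, (coconeH_eq c x.2).trans hx⟩, fun h ⟨hpv, hh⟩ => ?_⟩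
    exact congrArg Subtype.val (hx_unique ⟨h, hpv⟩ ⟨rfl, (coconeH_eq c hpv).symm.trans hh⟩)

theorem factorsCocone_coconeDesc (hc : IsCoconeNatural c) : FactorsCocone c (coconeDesc hc) :=
  fun _ m hE => ⟨fun a => (unitLeg_fA_true hc hE m a).symm, fun h => (coconeH_fH hc hE m h).symm,
    fun v => (corollaLeg_fV hc hE m v).symm⟩

theorem FactorsCocone.eq {u u' : Etale G K} (hu : FactorsCocone c u) (hu' : FactorsCocone c u') :
    u = u' := by
  ext x
  · exact ((hu _ _ unitGraph_isElementary).1 true).symm.trans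
      ((hu' _ (unitMap G x) unitGraph_isElementary).1 true)
  · exact ((hu _ _ (corolla_isElementary G (G.p x))).2.1 ⟨x, rfl⟩).symm.trans
      ((hu' _ (corollaMap G (G.p x)) (corolla_isElementary G (G.p x))).2.1 ⟨x, rfl⟩)
  · exact ((hu _ _ (corolla_isElementary G x)).2.2 ()).symm.trans
      ((hu' _ (corollaMap G x) (corolla_isElementary G x)).2.2 ())

end Cocone

end

/-- Every JK graph `G` is canonically the colimit of its
elementary subgraphs, indexed by the category of elements `el(G) = elGr ↓ G`:
any cocone under this diagram (a compatible family of etale morphisms to `K`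
indexed by the etale morphisms from elementary graphs to `G`) factors uniquely
through `G`. -/
theorem jk_graph_colimit_of_elements (G K : JKGraph)
    (c : ∀ (E : JKGraph), Etale E G → JKIsElementary E → Etale E K)
    (hnat : ∀ (E E' : JKGraph) (hE : JKIsElementary E) (hE' : JKIsElementary E')
      (m : Etale E G) (m' : Etale E' G) (e : Etale E E'),
      IsEComp e m' m → IsEComp e (c E' m' hE') (c E m hE)) :
    ∃! u : Etale G K, ∀ (E : JKGraph) (m : Etale E G) (hE : JKIsElementary E),
      IsEComp m u (c E m hE) :=
  ⟨coconeDesc hnat, factorsCocone_coconeDesc hnat,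
    fun _ hu => FactorsCocone.eq hu (factorsCocone_coconeDesc hnat)⟩
end
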